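/- Let Λ = Z_p[[X]] and let M be a finitely generated Λ-module. Suppose that multiplication by X is injective on M and that multiplication by p is injective on M/XM. Then M is a free Λ-module of finite rank. -/

import Mathlib

/-!
`Λ/(X) ≅ ℤ_p` is a discrete valuation ring with uniformizer `p`, so `p`-regularity makes the
finitely generated `Λ/(X)`-module `M/XM` torsion-free, hence free. Since `X` is `M`-regular and
lies in the Jacobson radical of the Noetherian local ring `Λ`, freeness lifts from `M/XM` to `M`:
a lifted basis generates `M` by Nakayama, and `X`-regularity makes it independent.
-/

open PowerSeries

namespace PowerSeries

variable {R : Type*} [CommRing R]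

theorem ker_constantCoeff : RingHom.ker (constantCoeff (R := R)) = Ideal.span {X} := by
  ext φ
  rw [RingHom.mem_ker, Ideal.mem_span_singleton, X_dvd_iff]

variable (R) in
noncomputable def quotientSpanXEquiv : R⟦X⟧ ⧸ Ideal.span {(X : R⟦X⟧)} ≃+* R :=
  (Ideal.quotEquivOfEq ker_constantCoeff.symm).trans
    (RingHom.quotientKerEquivOfSurjective constantCoeff_surj)

theorem irreducible_natCast_quotient_span_X_iff (n : ℕ) :
    Irreducible (n : R⟦X⟧ ⧸ Ideal.span {(X : R⟦X⟧)}) ↔ Irreducible (n : R) := by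
  rw [← MulEquiv.irreducible_iff (quotientSpanXEquiv R), map_natCast]

instance [IsDomain R] : (Ideal.span {(X : R⟦X⟧)}).IsPrime := span_X_isPrime

instance [IsDomain R] [IsDiscreteValuationRing R] :
    IsDiscreteValuationRing (R⟦X⟧ ⧸ Ideal.span {(X : R⟦X⟧)}) :=
  IsDiscreteValuationRing.RingEquivClass.isDiscreteValuationRing (quotientSpanXEquiv R).symm

theorem X_mem_jacobson_bot [IsLocalRing R] : X ∈ (⊥ : Ideal R⟦X⟧).jacobson := by
  rw [IsLocalRing.jacobson_eq_maximalIdeal ⊥ bot_ne_top, IsLocalRing.mem_maximalIdeal,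
    mem_nonunits_iff, isUnit_iff_constantCoeff]
  simp

end PowerSeries

theorem IsDiscreteValuationRing.free_of_isSMulRegular {S N : Type*} [CommRing S] [IsDomain S]
    [IsDiscreteValuationRing S] [AddCommGroup N] [Module S N] [Module.Finite S N] {ϖ : S}
    (hϖ : Irreducible ϖ) (hreg : IsSMulRegular N ϖ) : Module.Free S N :=
  have : Module.IsTorsionFree S N := ⟨fun r hr ↦ by
    obtain ⟨n, u, rfl⟩ := eq_unit_mul_pow_irreducible hr.ne_zero hϖ
    exact (u.isUnit.isSMulRegular N).mul (hreg.pow n)⟩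
  inferInstance

/-- Let `Λ = ℤ_p⟦X⟧` and let `M` be a finitely generated `Λ`-module.  If
multiplication by `X` is injective on `M` and multiplication by `p` is injective
on `M/XM`, then `M` is a free `Λ`-module. -/
theorem free_of_X_injective_and_p_injective_mod_X (p : ℕ) [Fact p.Prime]
    (M : Type*) [AddCommGroup M] [Module (PowerSeries ℤ_[p]) M]
    [Module.Finite (PowerSeries ℤ_[p]) M]
    (hX : Function.Injective fun m : M => (PowerSeries.X : PowerSeries ℤ_[p]) • m)
    (hp : Function.Injective fun m : M ⧸ (Ideal.span {(PowerSeries.X : PowerSeries ℤ_[p])} •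
        (⊤ : Submodule (PowerSeries ℤ_[p]) M)) => ((p : PowerSeries ℤ_[p])) • m) :
    Module.Free (PowerSeries ℤ_[p]) M := by
  set I := Ideal.span {(X : ℤ_[p]⟦X⟧)}
  have := Module.finitePresentation_of_finite ℤ_[p]⟦X⟧ M
  have := Module.Finite.of_restrictScalars_finite ℤ_[p]⟦X⟧ (ℤ_[p]⟦X⟧ ⧸ I)
    (M ⧸ I • (⊤ : Submodule ℤ_[p]⟦X⟧ M))
  have hp_reg : IsSMulRegular (M ⧸ I • (⊤ : Submodule ℤ_[p]⟦X⟧ M)) (p : ℤ_[p]⟦X⟧ ⧸ I) := by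
    intro a b hab
    apply hp
    simpa only [Nat.cast_smul_eq_nsmul] using hab
  have hfree_mod_X : Module.Free (ℤ_[p]⟦X⟧ ⧸ I) (M ⧸ I • (⊤ : Submodule ℤ_[p]⟦X⟧ M)) :=
    IsDiscreteValuationRing.free_of_isSMulRegular
      ((irreducible_natCast_quotient_span_X_iff p).mpr PadicInt.irreducible_p) hp_reg
  have : Module.Free (ℤ_[p]⟦X⟧ ⧸ I) (QuotSMulTop X M) := .of_equiv <|
    (Submodule.quotEquivOfEq _ _ (Submodule.ideal_span_singleton_smul X ⊤))
      |>.extendScalarsOfSurjective Ideal.Quotient.mk_surjective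
  have hX_reg : IsSMulRegular M (X : ℤ_[p]⟦X⟧) := hX
  exact (Module.free_quotSMulTop_iff_free ℤ_[p]⟦X⟧ M X_mem_jacobson_bot hX_reg).mp this
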